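/- Let Y be a real symmetric n×n matrix and let E = 2 x xᵀ + ‖x‖₂² I_n for some nonzero x ∈ ℝⁿ with ‖x‖₂² = α. Let δ = ‖Y - E‖ (operator norm), and let x₀ be an eigenvector of Y for its largest eigenvalue λ₀, normalized so that ‖x₀‖₂² = α. Then ⟨x₀, x⟩² ≥ α² - αδ. -/

import Mathlib

/-!
Write `Y = E + (Y - E)`, where `⟪E v, v⟫ = 2⟪x, v⟫² + α‖v‖²` and `|⟪(Y - E) v, v⟫| ≤ δ‖v‖²`.
Since `Y` is symmetric, `λ₀‖v‖²` bounds its quadratic form; at `v = x` this gives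
`λ₀α ≥ 3α² - δα`. At the eigenvector `v = x₀` the quadratic form equals `λ₀α`, and is at most
`2⟪x, x₀⟫² + α² + δα`. Comparing the two bounds on `λ₀α` gives the claim.
-/

open Module.End RCLike in
theorem ContinuousLinearMap.re_inner_apply_self_le_of_hasEigenvalue_le {𝕜 E : Type*} [RCLike 𝕜]
    [NormedAddCommGroup E] [InnerProductSpace 𝕜 E] [FiniteDimensional 𝕜 E] {T : E →L[𝕜] E}
    (hT : (T : E →ₗ[𝕜] E).IsSymmetric) {c : ℝ}
    (hc : ∀ μ : ℝ, HasEigenvalue (T : E →ₗ[𝕜] E) μ → μ ≤ c) (v : E) :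
    re (inner 𝕜 (T v) v) ≤ c * ‖v‖ ^ 2 := by
  rcases eq_or_ne v 0 with rfl | hv
  · simp
  have : Nontrivial E := ⟨⟨v, 0, hv⟩⟩
  have hbdd : BddAbove (Set.range fun w : { w : E // w ≠ 0 } ↦ T.rayleighQuotient w) :=
    ⟨‖T‖, by rintro _ ⟨w, rfl⟩; exact (le_abs_self _).trans (T.rayleighQuotient_le_norm w)⟩
  -- the supremum of the Rayleigh quotient is itself an eigenvalue
  have hrq : T.rayleighQuotient v ≤ c :=
    (le_ciSup hbdd ⟨v, hv⟩).trans (hc _ hT.hasEigenvalue_iSup_of_finiteDimensional)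
  rwa [rayleighQuotient, reApplyInnerSelf_apply, div_le_iff₀ (by positivity)] at hrq

theorem ContinuousLinearMap.norm_inner_apply_self_le {𝕜 E : Type*} [RCLike 𝕜]
    [NormedAddCommGroup E] [InnerProductSpace 𝕜 E] (T : E →L[𝕜] E) (v : E) :
    ‖inner 𝕜 (T v) v‖ ≤ ‖T‖ * ‖v‖ ^ 2 :=
  calc ‖inner 𝕜 (T v) v‖ ≤ ‖T v‖ * ‖v‖ := norm_inner_le_norm _ _
    _ ≤ ‖T‖ * ‖v‖ * ‖v‖ := by gcongr; exact T.le_opNorm v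
    _ = ‖T‖ * ‖v‖ ^ 2 := by ring

namespace Matrix

variable {ι : Type*} [Fintype ι] [DecidableEq ι]

theorem toEuclideanCLM_vecMulVec_apply {𝕜 : Type*} [RCLike 𝕜] (x y w : EuclideanSpace 𝕜 ι) :
    toEuclideanCLM (𝕜 := 𝕜) (vecMulVec x (star y)) w = inner 𝕜 y w • x := by
  rw [← InnerProductSpace.symm_toEuclideanLin_rankOne, ← ContinuousLinearMap.coe_coe,
    coe_toEuclideanCLM_eq_toEuclideanLin, LinearEquiv.apply_symm_apply]
  simp

theorem inner_toEuclideanCLM_smul_vecMulVec_add_smul_one_apply_self (a b : ℝ)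
    (x w : EuclideanSpace ℝ ι) :
    inner ℝ (toEuclideanCLM (𝕜 := ℝ) (a • vecMulVec x x + b • 1) w) w
      = a * inner ℝ x w ^ 2 + b * ‖w‖ ^ 2 := by
  have hx : toEuclideanCLM (𝕜 := ℝ) (vecMulVec x x) w = inner ℝ x w • x := by
    simpa using toEuclideanCLM_vecMulVec_apply x x w
  rw [map_add, map_smul, map_smul, map_one, _root_.add_apply, _root_.smul_apply,
    _root_.smul_apply, hx, one_apply_eq_self, inner_add_left, real_inner_smul_left,
    real_inner_smul_left, real_inner_smul_left, real_inner_self_eq_norm_sq, real_inner_comm w x]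
  ring

end Matrix

theorem leading_eigenvector_correlation_general (n : ℕ) (Y : Matrix (Fin n) (Fin n) ℝ)
    (hY : Y.IsSymm) (x x₀ : EuclideanSpace ℝ (Fin n)) (α lam0 : ℝ)
    (hxα : ‖x‖ ^ 2 = α)
    (E : Matrix (Fin n) (Fin n) ℝ)
    (hE : E = (2 : ℝ) • Matrix.of (fun i j : Fin n => x i * x j) +
      (‖x‖ ^ 2) • (1 : Matrix (Fin n) (Fin n) ℝ))
    (δ : ℝ) (hδ : δ = ‖Matrix.toEuclideanCLM (𝕜 := ℝ) (Y - E)‖)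
    (hx₀ : Matrix.toEuclideanCLM (𝕜 := ℝ) Y x₀ = lam0 • x₀)
    (hx₀α : ‖x₀‖ ^ 2 = α)
    (hmax : ∀ (v : EuclideanSpace ℝ (Fin n)) (μ : ℝ), v ≠ 0 →
      Matrix.toEuclideanCLM (𝕜 := ℝ) Y v = μ • v → μ ≤ lam0) :
    (inner ℝ x₀ x : ℝ) ^ 2 ≥ α ^ 2 - α * δ := by
  set T := Matrix.toEuclideanCLM (𝕜 := ℝ) (n := Fin n)
  have hE' : E = (2 : ℝ) • Matrix.vecMulVec x x + α • 1 := by rw [hE, hxα]; rfl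
  have hsplit (v : EuclideanSpace ℝ (Fin n)) :
      inner ℝ (T Y v) v = 2 * inner ℝ x v ^ 2 + α * ‖v‖ ^ 2 + inner ℝ (T (Y - E) v) v := by
    rw [map_sub, sub_apply, inner_sub_left, hE',
      Matrix.inner_toEuclideanCLM_smul_vecMulVec_add_smul_one_apply_self]
    ring
  have hpert (v : EuclideanSpace ℝ (Fin n)) : |inner ℝ (T (Y - E) v) v| ≤ δ * ‖v‖ ^ 2 := by
    simpa [hδ] using (T (Y - E)).norm_inner_apply_self_le v
  have hYsymm : (T Y : EuclideanSpace ℝ (Fin n) →ₗ[ℝ] EuclideanSpace ℝ (Fin n)).IsSymmetric := by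
    rw [Matrix.coe_toEuclideanCLM_eq_toEuclideanLin]
    exact Matrix.isSymmetric_toEuclideanLin_iff.mpr (Matrix.isHermitian_iff_isSymm.mpr hY)
  have hrayleigh : inner ℝ (T Y x) x ≤ lam0 * α := by
    refine hxα ▸ (T Y).re_inner_apply_self_le_of_hasEigenvalue_le hYsymm (fun μ hμ ↦ ?_) x
    obtain ⟨v, hv, hv0⟩ := hμ.exists_hasEigenvector
    exact hmax v μ hv0 (Module.End.mem_eigenspace_iff.mp hv)
  have heig : inner ℝ (T Y x₀) x₀ = lam0 * α := by
    rw [hx₀, real_inner_smul_left, real_inner_self_eq_norm_sq, hx₀α]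
  have hlower : 3 * α ^ 2 - α * δ ≤ lam0 * α := by
    have h := hsplit x
    rw [real_inner_self_eq_norm_sq, hxα] at h
    linarith [(abs_le.mp (hxα ▸ hpert x)).1]
  have hupper : lam0 * α ≤ 2 * inner ℝ x x₀ ^ 2 + α ^ 2 + α * δ := by
    have h := hsplit x₀
    rw [heig, hx₀α] at h
    linarith [(abs_le.mp (hx₀α ▸ hpert x₀)).2]
  rw [real_inner_comm]
  linarith

theorem leading_eigenvector_correlation (n : ℕ) (Y : Matrix (Fin n) (Fin n) ℝ)
    (hY : Y.IsSymm) (x x₀ : EuclideanSpace ℝ (Fin n)) (α lam0 : ℝ) (hx : x ≠ 0)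
    (hxα : ‖x‖ ^ 2 = α)
    (E : Matrix (Fin n) (Fin n) ℝ)
    (hE : E = (2 : ℝ) • Matrix.of (fun i j : Fin n => x i * x j) +
      (‖x‖ ^ 2) • (1 : Matrix (Fin n) (Fin n) ℝ))
    (δ : ℝ) (hδ : δ = ‖Matrix.toEuclideanCLM (𝕜 := ℝ) (Y - E)‖)
    (hx₀ : Matrix.toEuclideanCLM (𝕜 := ℝ) Y x₀ = lam0 • x₀)
    (hx₀α : ‖x₀‖ ^ 2 = α)
    (hmax : ∀ (v : EuclideanSpace ℝ (Fin n)) (μ : ℝ), v ≠ 0 →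
      Matrix.toEuclideanCLM (𝕜 := ℝ) Y v = μ • v → μ ≤ lam0) :
    (inner ℝ x₀ x : ℝ) ^ 2 ≥ α ^ 2 - α * δ :=
  leading_eigenvector_correlation_general n Y hY x x₀ α lam0 hxα E hE δ hδ hx₀ hx₀α hmax
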